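/- arXiv:1806.06805 — 2 statements merged into one kernel-verified Lean document; each statement's English description precedes it below -/
import Mathlib

section
/- Assume a < b. Then f(−a²) = 0 if and only if x_c = 0, and f(−b²) = 0 if and only if y_c = 0. Explicitly, f(−a²) = x_c²(a² − b²)/b² and f(−b²) = −y_c²(a² − b²)/a². -/
open Matrix Polynomial

/-- The 4×4 matrix of the elliptic paraboloid x²/a² + y²/b² - z = 0. -/
noncomputable def Pmat (a b : ℝ) : Matrix (Fin 4) (Fin 4) ℝ :=
  !![1/a^2, 0, 0, 0;
     0, 1/b^2, 0, 0;
     0, 0, 0, -(1/2 : ℝ);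
     0, 0, -(1/2 : ℝ), 0]

/-- The 4×4 matrix of the sphere (x-x_c)² + (y-y_c)² + (z-z_c)² = r². -/
noncomputable def Smat (xc yc zc r : ℝ) : Matrix (Fin 4) (Fin 4) ℝ :=
  !![1, 0, 0, -xc;
     0, 1, 0, -yc;
     0, 0, 1, -zc;
     -xc, -yc, -zc, xc^2 + yc^2 + zc^2 - r^2]

/-- The characteristic polynomial f(λ) = det(λP + S), as a real polynomial in λ. -/
noncomputable def charPoly (a b xc yc zc r : ℝ) : Polynomial ℝ :=
  Matrix.det ((X : Polynomial ℝ) • (Pmat a b).map C + (Smat xc yc zc r).map C)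

theorem Matrix.eval_det_X_smul_map_C_add_map_C {n R : Type*} [Fintype n] [DecidableEq n]
    [CommRing R] (A B : Matrix n n R) (t : R) :
    ((X : R[X]) • A.map C + B.map C).det.eval t = (t • A + B).det := by
  rw [← coe_evalRingHom, RingHom.map_det]
  congr 1
  ext i j
  simpa using mul_comm _ _

/-- `t • Pmat a b + Smat xc yc zc r` is an arrowhead matrix (diagonal plus last row and column),
which gives this closed form; its first two factors vanish at `t = -a ^ 2` and `t = -b ^ 2`. -/
theorem eval_charPoly (a b xc yc zc r t : ℝ) :
    (charPoly a b xc yc zc r).eval t =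
      (1 + t / a ^ 2) * (1 + t / b ^ 2) * (xc ^ 2 + yc ^ 2 + zc ^ 2 - r ^ 2 - (zc + t / 2) ^ 2)
        - xc ^ 2 * (1 + t / b ^ 2) - yc ^ 2 * (1 + t / a ^ 2) := by
  rw [charPoly, Matrix.eval_det_X_smul_map_C_add_map_C, Matrix.det_succ_row_zero]
  simp [Pmat, Smat, Fin.sum_univ_succ, Matrix.det_fin_three, Fin.succAbove]
  ring

theorem eval_charPoly_neg_sq_left {a b : ℝ} (ha : a ≠ 0) (hb : b ≠ 0) (xc yc zc r : ℝ) :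
    (charPoly a b xc yc zc r).eval (-a ^ 2) = xc ^ 2 * (a ^ 2 - b ^ 2) / b ^ 2 := by
  rw [eval_charPoly]
  field_simp
  ring

theorem eval_charPoly_neg_sq_right {a b : ℝ} (ha : a ≠ 0) (hb : b ≠ 0) (xc yc zc r : ℝ) :
    (charPoly a b xc yc zc r).eval (-b ^ 2) = -(yc ^ 2 * (a ^ 2 - b ^ 2) / a ^ 2) := by
  rw [eval_charPoly]
  field_simp
  ring

theorem charPoly_eval_neg_a_sq_neg_b_sq_general (a b r xc yc zc : ℝ)
    (ha : 0 < a) (hab : a < b) :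
    (charPoly a b xc yc zc r).eval (-a^2) = xc^2 * (a^2 - b^2) / b^2 ∧
    (charPoly a b xc yc zc r).eval (-b^2) = -(yc^2 * (a^2 - b^2) / a^2) ∧
    ((charPoly a b xc yc zc r).IsRoot (-a^2) ↔ xc = 0) ∧
    ((charPoly a b xc yc zc r).IsRoot (-b^2) ↔ yc = 0) := by
  have ha0 : a ≠ 0 := ha.ne'
  have hb0 : b ≠ 0 := (ha.trans hab).ne'
  have hab2 : a ^ 2 - b ^ 2 ≠ 0 := sub_ne_zero.2 (pow_lt_pow_left₀ hab ha.le two_ne_zero).ne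
  have h1 := eval_charPoly_neg_sq_left ha0 hb0 xc yc zc r
  have h2 := eval_charPoly_neg_sq_right ha0 hb0 xc yc zc r
  refine ⟨h1, h2, ?_, ?_⟩ <;> simp [IsRoot, h1, h2, ha0, hb0, hab2]

/-- values of f at -a² and -b², and the root criteria in terms of
x_c and y_c (for a < b). -/
theorem charPoly_eval_neg_a_sq_neg_b_sq (a b r xc yc zc : ℝ)
    (ha : 0 < a) (hab : a < b) (hr : 0 < r) :
    (charPoly a b xc yc zc r).eval (-a^2) = xc^2 * (a^2 - b^2) / b^2 ∧
    (charPoly a b xc yc zc r).eval (-b^2) = -(yc^2 * (a^2 - b^2) / a^2) ∧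
    ((charPoly a b xc yc zc r).IsRoot (-a^2) ↔ xc = 0) ∧
    ((charPoly a b xc yc zc r).IsRoot (-b^2) ↔ yc = 0) :=
  charPoly_eval_neg_a_sq_neg_b_sq_general a b r xc yc zc ha hab
end

section
/- Assume a < b and 2r ≤ a². Then −a² is a root of the characteristic polynomial f of multiplicity at least 3 if and only if x_c = 0, y_c = 0, z_c = a²/2 and r = a²/2. -/
open Matrix Polynomial

/-! Since the matrix λP + S is an arrow matrix, f = αβ(d - w²) - x_c²β - y_c²α with
α = 1 + λ/a², β = 1 + λ/b², w = z_c + λ/2, d = x_c² + y_c² + z_c² - r², and α vanishes at -a².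
Writing λ = t - a², the multiplicity is at least 3 iff the coefficients of 1, t, t² vanish.
The first forces x_c = 0; with Q = a²z_c - a⁴/4 - r² the other two then become
(b² - a²)Q = a²y_c² and a²Q = (b² - a²)(r² - a⁴/4). Smallness makes the last right side ≤ 0,
so Q = 0, whence y_c = 0, r = a²/2 and z_c = a²/2. -/

theorem Polynomial.le_rootMultiplicity_iff_coeff_comp {R : Type*} [CommRing R] {p : R[X]}
    (hp : p ≠ 0) {t : R} {n : ℕ} :
    n ≤ p.rootMultiplicity t ↔ ∀ m < n, (p.comp (X + C t)).coeff m = 0 := by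
  have hcomp : p.comp (X + C t) ≠ 0 := by rwa [Ne, comp_X_add_C_eq_zero_iff]
  rw [rootMultiplicity_eq_rootMultiplicity, le_rootMultiplicity_iff hcomp, map_zero, sub_zero,
    X_pow_dvd_iff]

theorem Polynomial.coeff_lt_three_eq_zero_iff {R : Type*} [CommRing R] [NoZeroDivisors R]
    {k e₀ e₁ e₂ : R} (hk : k ≠ 0) (q : R[X]) :
    (∀ m < 3, (C k * (C e₀ + C e₁ * X + C e₂ * X ^ 2 - X ^ 3 * q)).coeff m = 0)
      ↔ e₀ = 0 ∧ e₁ = 0 ∧ e₂ = 0 := by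
  simp [Nat.forall_lt_succ_right, Nat.le_one_iff_eq_zero_or_eq_one, or_imp, forall_and, and_assoc,
    coeff_X_pow_mul', coeff_X, coeff_C, hk]

theorem Matrix.det_arrow {R : Type*} [CommRing R] (p q u v w d : R) :
    !![p, 0, 0, u; 0, q, 0, v; 0, 0, 1, w; u, v, w, d].det
      = p * q * (d - w ^ 2) - u ^ 2 * q - v ^ 2 * p := by
  simp [det_succ_row_zero, Fin.sum_univ_succ, Fin.succAbove]
  ring

theorem charPoly_eq_arrow (a b xc yc zc r : ℝ) :
    charPoly a b xc yc zc r
      = (C (1 / a ^ 2) * X + 1) * (C (1 / b ^ 2) * X + 1)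
          * (C (xc ^ 2 + yc ^ 2 + zc ^ 2 - r ^ 2) - (C (1 / 2) * X + C zc) ^ 2)
        - C xc ^ 2 * (C (1 / b ^ 2) * X + 1) - C yc ^ 2 * (C (1 / a ^ 2) * X + 1) := by
  have : (X : ℝ[X]) • (Pmat a b).map C + (Smat xc yc zc r).map C
      = !![C (1 / a ^ 2) * X + 1, 0, 0, -C xc; 0, C (1 / b ^ 2) * X + 1, 0, -C yc;
          0, 0, 1, -(C (1 / 2) * X + C zc); -C xc, -C yc, -(C (1 / 2) * X + C zc),
          C (xc ^ 2 + yc ^ 2 + zc ^ 2 - r ^ 2)] := by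
    ext i j
    fin_cases i <;> fin_cases j <;> simp [Pmat, Smat] <;> ring
  rw [charPoly, this, det_arrow]
  ring

theorem charPoly_eval_zero (a b xc yc zc r : ℝ) : (charPoly a b xc yc zc r).eval 0 = -r ^ 2 := by
  simp [charPoly_eq_arrow]
  ring

theorem charPoly_comp_X_add_C_neg_sq (a b xc yc zc r : ℝ) (ha : a ≠ 0) (hb : b ≠ 0) :
    (charPoly a b xc yc zc r).comp (X + C (-a ^ 2))
      = C (1 / (a ^ 2 * b ^ 2)) *
          (C (-a ^ 2 * (b ^ 2 - a ^ 2) * xc ^ 2)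
            + C ((b ^ 2 - a ^ 2) * (xc ^ 2 + yc ^ 2 + a ^ 2 * zc - a ^ 4 / 4 - r ^ 2)
                - a ^ 2 * xc ^ 2 - b ^ 2 * yc ^ 2) * X
            + C (xc ^ 2 + yc ^ 2 + a ^ 2 * zc - a ^ 4 / 4 - r ^ 2
                - (b ^ 2 - a ^ 2) * (zc - a ^ 2 / 2)) * X ^ 2
            - X ^ 3 * (C ((b ^ 2 - a ^ 2) / 4 + zc - a ^ 2 / 2) + C (1 / 4) * X)) := by
  apply Polynomial.funext
  intro t
  simp [charPoly_eq_arrow]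
  field_simp
  ring

theorem shifted_coeffs_eq_zero_iff {a b r xc yc zc : ℝ} (ha : 0 < a) (hab : a < b) (hr : 0 < r)
    (hsmall : 2 * r ≤ a ^ 2) :
    (-a ^ 2 * (b ^ 2 - a ^ 2) * xc ^ 2 = 0
      ∧ (b ^ 2 - a ^ 2) * (xc ^ 2 + yc ^ 2 + a ^ 2 * zc - a ^ 4 / 4 - r ^ 2)
          - a ^ 2 * xc ^ 2 - b ^ 2 * yc ^ 2 = 0
      ∧ xc ^ 2 + yc ^ 2 + a ^ 2 * zc - a ^ 4 / 4 - r ^ 2 - (b ^ 2 - a ^ 2) * (zc - a ^ 2 / 2) = 0)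
      ↔ xc = 0 ∧ yc = 0 ∧ zc = a ^ 2 / 2 ∧ r = a ^ 2 / 2 := by
  have hs : 0 < b ^ 2 - a ^ 2 := by nlinarith
  constructor
  · rintro ⟨e0, e1, e2⟩
    have hxc : xc = 0 := by
      have : a ^ 2 * (b ^ 2 - a ^ 2) ≠ 0 := by positivity
      simpa [this] using e0
    subst hxc
    obtain ⟨Q, hQ⟩ : ∃ Q, Q = a ^ 2 * zc - a ^ 4 / 4 - r ^ 2 := ⟨_, rfl⟩
    have hQ_yc : (b ^ 2 - a ^ 2) * Q = a ^ 2 * yc ^ 2 := by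
      linear_combination e1 + (b ^ 2 - a ^ 2) * hQ
    have hQ_r : a ^ 2 * Q = (b ^ 2 - a ^ 2) * (r ^ 2 - a ^ 4 / 4) := by
      linear_combination a ^ 2 * e2 + hQ_yc + (2 * a ^ 2 - b ^ 2) * hQ
    have hr_sq : r ^ 2 ≤ a ^ 4 / 4 := by nlinarith
    have hQ0 : Q = 0 := by
      apply le_antisymm
      · nlinarith
      · nlinarith [sq_nonneg yc]
    have hyc : yc = 0 := by
      have : a ^ 2 * yc ^ 2 = 0 := by rw [← hQ_yc, hQ0, mul_zero]
      simpa [ha.ne'] using this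
    have hr' : r = a ^ 2 / 2 := by
      have : (b ^ 2 - a ^ 2) * ((r - a ^ 2 / 2) * (r + a ^ 2 / 2)) = 0 := by
        linear_combination -hQ_r + a ^ 2 * hQ0
      rcases mul_eq_zero.mp this with h | h
      · exact absurd h hs.ne'
      · rcases mul_eq_zero.mp h with h | h <;> nlinarith
    refine ⟨rfl, hyc, ?_, hr'⟩
    have : a ^ 2 * (zc - a ^ 2 / 2) = 0 := by
      linear_combination hQ0 - hQ + (r + a ^ 2 / 2) * hr'
    simpa [ha.ne', sub_eq_zero] using this
  · rintro ⟨rfl, rfl, rfl, rfl⟩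
    refine ⟨by ring, by ring, by ring⟩

/-- (a < b, smallness) -a² is a root of f of multiplicity at least
3 iff x_c = 0, y_c = 0, z_c = a²/2 and r = a²/2. -/
theorem neg_a_sq_triple_root_iff (a b r xc yc zc : ℝ)
    (ha : 0 < a) (hab : a < b) (hr : 0 < r) (hsmall : 2*r ≤ a^2) :
    3 ≤ rootMultiplicity (-a^2) (charPoly a b xc yc zc r) ↔
      (xc = 0 ∧ yc = 0 ∧ zc = a^2/2 ∧ r = a^2/2) := by
  have hf : charPoly a b xc yc zc r ≠ 0 := fun h ↦ by
    simpa [h, hr.ne'] using charPoly_eval_zero a b xc yc zc r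
  have hb : 0 < b := ha.trans hab
  have hk : 1 / (a ^ 2 * b ^ 2) ≠ 0 := by positivity
  rw [le_rootMultiplicity_iff_coeff_comp hf,
    charPoly_comp_X_add_C_neg_sq a b xc yc zc r ha.ne' hb.ne', coeff_lt_three_eq_zero_iff hk,
    shifted_coeffs_eq_zero_iff ha hab hr hsmall]
end
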